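/- In the monoid M = ⟨x, y, z | xy = yzx⟩, for all k, l ∈ ℕ⁺ the length set of x^k y^l is the integer interval [k+l, 2(k+l)−1], i.e., L_M(x^k y^l) = {m ∈ ℕ : k+l ≤ m ≤ 2(k+l)−1}. -/

import Mathlib

/-- Two words over `X` represent the same element of the presented monoid `⟨X | R⟩`. -/
def eqM {X : Type*} (R : Set (FreeMonoid X × FreeMonoid X)) (a b : FreeMonoid X) : Prop :=
  conGen (fun x y => (x, y) ∈ R) a b

/-- The length set of a word `a` in `⟨X | R⟩`. -/
def LSet {X : Type*} (R : Set (FreeMonoid X × FreeMonoid X)) (a : FreeMonoid X) : Set ℕ :=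
  {n | ∃ b : FreeMonoid X, eqM R a b ∧ b.length = n}


namespace Stmt15

/-- Scan state: (rest, lastY-position-in-first-block?, d0 of first block). -/
abbrev S := ℕ × Option ℕ × ℕ

def step (a : Fin 3) (s : S) : S :=
  if a = 0 then (s.1, s.2.1.map (· + 1), s.2.1.getD 0)
  else if a = 1 then (s.1, some (s.2.1.getD 0 + 1), s.2.2)
  else (s.1 + s.2.2 + 1, none, 0)

def sig (w : List (Fin 3)) : S := w.foldr step (0, none, 0)

def mu (w : List (Fin 3)) : ℕ := (sig w).1 + (sig w).2.2

/-- Relation between scan states guaranteeing equal future `mu` values. -/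
def SRel (s t : S) : Prop :=
  s = t ∨ ∃ r r' a b d e, s = (r, some a, d) ∧ t = (r', some b, e) ∧
    r + d = r' + e ∧ d ≤ a ∧ e ≤ b ∧ a - d = b - e

lemma srel_mu {s t : S} (h : SRel s t) : s.1 + s.2.2 = t.1 + t.2.2 := by
  rcases h with rfl | ⟨r, r', a, b, d, e, rfl, rfl, h1, _, _, _⟩
  · rfl
  · simpa using h1

lemma srel_step {s t : S} (h : SRel s t) (a : Fin 3) : SRel (step a s) (step a t) := by
  rcases h with rfl | ⟨r, r', p, q, d, e, rfl, rfl, h1, h2, h3, h4⟩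
  · exact Or.inl rfl
  by_cases ha0 : a = 0
  · subst ha0
    have hs : step 0 ((r, some p, d) : S) = (r, some (p+1), p) := by simp [step]
    have ht : step 0 ((r', some q, e) : S) = (r', some (q+1), q) := by simp [step]
    rw [hs, ht]
    exact Or.inr ⟨r, r', p + 1, q + 1, p, q, rfl, rfl, by omega, by omega, by omega, by omega⟩
  by_cases ha1 : a = 1
  · subst ha1
    have hs : step 1 ((r, some p, d) : S) = (r, some (p+1), d) := by simp [step]
    have ht : step 1 ((r', some q, e) : S) = (r', some (q+1), e) := by simp [step]
    rw [hs, ht]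
    exact Or.inr ⟨r, r', p + 1, q + 1, d, e, rfl, rfl, by omega, by omega, by omega, by omega⟩
  · have hs : step a ((r, some p, d) : S) = (r + d + 1, none, 0) := by simp [step, ha0, ha1]
    have ht : step a ((r', some q, e) : S) = (r' + e + 1, none, 0) := by simp [step, ha0, ha1]
    rw [hs, ht]
    exact Or.inl (by rw [show r + d = r' + e from h1])

lemma srel_base (s : S) : SRel (step 0 (step 1 s)) (step 1 (step 2 (step 0 s))) := by
  obtain ⟨r, o, d⟩ := s
  refine Or.inr ⟨r, r + o.getD 0 + 1, o.getD 0 + 2, 1, o.getD 0 + 1, 0, ?_, ?_, by omega, by omega, by omega, by omega⟩ <;>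
    simp [step]

lemma sig_append (u w : List (Fin 3)) : sig (u ++ w) = u.foldr step (sig w) := by
  simp [sig, List.foldr_append]

lemma srel_foldr {s t : S} (h : SRel s t) (u : List (Fin 3)) :
    SRel (u.foldr step s) (u.foldr step t) := by
  induction u with
  | nil => exact h
  | cons a u ih => exact srel_step ih a

lemma mu_key (u v : List (Fin 3)) :
    mu (u ++ [0, 1] ++ v) = mu (u ++ [1, 2, 0] ++ v) := by
  have hb : SRel (sig ([0,1] ++ v)) (sig ([1,2,0] ++ v)) := srel_base (sig v)
  unfold mu
  rw [sig_append, sig_append] at hb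
  rw [List.append_assoc, List.append_assoc, sig_append u, sig_append u]
  exact srel_mu (srel_foldr hb u)


/-- `good` states: the invariant of reachable scan states. -/
def Good (s : S) : Prop :=
  (s.2.1 = none → s.2.2 = 0) ∧ ∀ a, s.2.1 = some a → s.2.2 ≤ a

lemma good_step (a : Fin 3) {s : S} (h : Good s) : Good (step a s) := by
  obtain ⟨r, o, d⟩ := s
  obtain ⟨hn, hs⟩ := h
  simp only [Good] at hn hs
  by_cases ha0 : a = 0
  · subst ha0
    cases o with
    | none =>
      have he : step 0 ((r, none, d) : S) = (r, none, 0) := by simp [step]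
      rw [he]
      exact ⟨fun _ => rfl, fun b hb => by simp at hb⟩
    | some p =>
      have he : step 0 ((r, some p, d) : S) = (r, some (p+1), p) := by simp [step]
      rw [he]
      refine ⟨by simp, fun b hb => ?_⟩
      simp at hb ⊢
      omega
  by_cases ha1 : a = 1
  · subst ha1
    have he : step 1 ((r, o, d) : S) = (r, some (o.getD 0 + 1), d) := by simp [step]
    rw [he]
    refine ⟨by simp, fun b hb => ?_⟩
    simp at hb ⊢
    cases o with
    | none =>
      have h0 : d = 0 := hn rfl
      simp at hb
      omega
    | some p =>
      have h0 : d ≤ p := hs p rfl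
      simp at hb
      omega
  · have he : step a ((r, o, d) : S) = (r + d + 1, none, 0) := by simp [step, ha0, ha1]
    rw [he]
    exact ⟨fun _ => rfl, fun b hb => by simp at hb⟩

lemma good_sig (w : List (Fin 3)) : Good (sig w) := by
  induction w with
  | nil => exact ⟨fun _ => rfl, fun a h => by simp [sig] at h⟩
  | cons a w ih => exact good_step a ih

/-- z-count is bounded by `mu`. -/
lemma count_two_le_mu (w : List (Fin 3)) : w.count 2 ≤ mu w := by
  induction w with
  | nil => simp [mu, sig]
  | cons a w ih =>
    have hg := good_sig w
    rcases hsig : sig w with ⟨r, o, d⟩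
    rw [hsig] at hg
    have hmu : mu w = r + d := by rw [mu, hsig]
    have hstep : sig (a :: w) = step a (r, o, d) := by rw [show sig (a :: w) = step a (sig w) from rfl, hsig]
    by_cases ha0 : a = 0
    · subst ha0
      have : mu (0 :: w) = r + o.getD 0 := by rw [mu, hstep]; simp [step]
      have hdo : d ≤ o.getD 0 := by
        cases o with
        | none => simpa using (hg.1 rfl).le
        | some p => simpa using hg.2 p rfl
      have hc : (List.count 2 (0 :: w) : ℕ) = w.count 2 := by simp
      omega
    by_cases ha1 : a = 1
    · subst ha1
      have : mu (1 :: w) = r + d := by rw [mu, hstep]; simp [step]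
      have hc : (List.count 2 (1 :: w) : ℕ) = w.count 2 := by simp
      omega
    · have : mu (a :: w) = r + d + 1 := by rw [mu, hstep]; simp [step, ha0, ha1]
      have hc : (List.count 2 (a :: w) : ℕ) ≤ w.count 2 + 1 := by
        rw [List.count_cons]; split <;> omega
      omega

/-- length equals the sum of letter counts. -/
lemma length_eq_counts (w : List (Fin 3)) :
    w.length = w.count 0 + w.count 1 + w.count 2 := by
  induction w with
  | nil => simp
  | cons a w ih =>
    simp only [List.length_cons, List.count_cons, ih]
    have : a = 0 ∨ a = 1 ∨ a = 2 := by omega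
    rcases this with rfl | rfl | rfl <;> simp <;> omega

def xs (k : ℕ) : List (Fin 3) := List.replicate k 0
def ys (l : ℕ) : List (Fin 3) := List.replicate l 1

lemma sig_ys (l : ℕ) (hl : 0 < l) : sig (ys l) = (0, some l, 0) := by
  induction l with
  | zero => omega
  | succ l ih =>
    rcases Nat.eq_zero_or_pos l with rfl | hl'
    · simp [ys, sig, step]
    · have : sig (ys (l+1)) = step 1 (sig (ys l)) := rfl
      rw [this, ih hl']
      simp [step]

lemma sig_xs_ys (k l : ℕ) (hk : 0 < k) (hl : 0 < l) :
    sig (xs k ++ ys l) = (0, some (l + k), l + k - 1) := by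
  induction k with
  | zero => omega
  | succ k ih =>
    rcases Nat.eq_zero_or_pos k with rfl | hk'
    · have : sig (xs 1 ++ ys l) = step 0 (sig (ys l)) := rfl
      rw [this, sig_ys l hl]
      simp [step]
    · have : sig (xs (k+1) ++ ys l) = step 0 (sig (xs k ++ ys l)) := rfl
      rw [this, ih hk']
      simp [step]
      omega

lemma mu_xs_ys (k l : ℕ) (hk : 0 < k) (hl : 0 < l) : mu (xs k ++ ys l) = k + l - 1 := by
  rw [mu, sig_xs_ys k l hk hl]
  simp
  omega

def Phi (w : List (Fin 3)) : ℕ × ℕ × ℕ := (w.count 0, w.count 1, mu w)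

lemma Phi_key (u v : List (Fin 3)) :
    Phi (u ++ 0 :: 1 :: v) = Phi (u ++ 1 :: 2 :: 0 :: v) := by
  have h1 : u ++ 0 :: 1 :: v = u ++ [0, 1] ++ v := by simp
  have h2 : u ++ 1 :: 2 :: 0 :: v = u ++ [1, 2, 0] ++ v := by simp
  rw [h1, h2]
  unfold Phi
  refine Prod.ext ?_ (Prod.ext ?_ ?_)
  · simp [List.count_append]
  · simp [List.count_append]
  · exact mu_key u v

abbrev FM := FreeMonoid (Fin 3)

def phiCon : Con FM where
  r a b := ∀ u v : FM, Phi (FreeMonoid.toList (u * a * v)) = Phi (FreeMonoid.toList (u * b * v))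
  iseqv := ⟨fun _ _ _ => rfl, fun h u v => (h u v).symm, fun h1 h2 u v => (h1 u v).trans (h2 u v)⟩
  mul' := by
    intro w x y z h1 h2 u v
    have A := h1 u (y * v)
    have B := h2 (u * x) v
    simp only [mul_assoc] at A B ⊢
    exact A.trans B

abbrev Rset : Set (FM × FM) :=
  {(FreeMonoid.of 0 * FreeMonoid.of 1, FreeMonoid.of 1 * FreeMonoid.of 2 * FreeMonoid.of 0)}

lemma base_phi : ∀ x y : FM, (x, y) ∈ Rset → phiCon x y := by
  intro x y hxy
  rw [Set.mem_singleton_iff, Prod.ext_iff] at hxy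
  obtain ⟨hx, hy⟩ := hxy
  subst hx; subst hy
  intro u v
  have e1 : FreeMonoid.toList (u * (FreeMonoid.of 0 * FreeMonoid.of 1) * v) =
      FreeMonoid.toList u ++ 0 :: 1 :: FreeMonoid.toList v := by
    simp [FreeMonoid.toList_mul, FreeMonoid.toList_of]
  have e2 : FreeMonoid.toList (u * (FreeMonoid.of 1 * FreeMonoid.of 2 * FreeMonoid.of 0) * v) =
      FreeMonoid.toList u ++ 1 :: 2 :: 0 :: FreeMonoid.toList v := by
    simp [FreeMonoid.toList_mul, FreeMonoid.toList_of]
  rw [e1, e2]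
  exact Phi_key _ _

lemma eqM_phi {a b : FM} (h : eqM Rset a b) : Phi a.toList = Phi b.toList := by
  have hle : conGen (fun x y : FM => (x, y) ∈ Rset) ≤ phiCon := Con.conGen_le.2 base_phi
  have h2 : phiCon a b := hle h
  have := h2 1 1
  simpa using this

open FreeMonoid in
def XZp : ℕ → FM
  | 0 => 1
  | n + 1 => (of 0 * of 2) * XZp n

open FreeMonoid in
def YZp : ℕ → FM
  | 0 => 1
  | n + 1 => (of 1 * of 2) * YZp n

open FreeMonoid in
lemma YZp_succ' (n : ℕ) : YZp (n + 1) = YZp n * (of 1 * of 2) := by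
  induction n with
  | zero => simp [YZp]
  | succ n ih =>
    rw [show YZp (n+2) = (of 1 * of 2) * YZp (n+1) from rfl, ih, ← mul_assoc,
      show (of 1 * of 2) * YZp n = YZp (n+1) from rfl, ih]

open FreeMonoid in
/-- The words in the congruence class of `x^k y^l` (besides itself). -/
def W (k l c d : ℕ) : FM :=
  of 0 ^ (k - 1 - c) *
    (of 1 * (of 2 * (XZp c * (YZp d * (of 0 * of 1 ^ (l - 1 - d))))))

abbrev cg : Con FM := conGen (fun x y : FM => (x, y) ∈ Rset)

open FreeMonoid

lemma cg_base : cg (of 0 * of 1) (of 1 * of 2 * of 0) := ConGen.Rel.of _ _ rfl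

lemma cg_of_eq {a b : FM} (h : a = b) : cg a b := h ▸ cg.refl a

lemma cg_ctx (u v a b : FM) (h : cg a b) : cg (u * a * v) (u * b * v) :=
  cg.mul (cg.mul (cg.refl u) h) (cg.refl v)

lemma cg_first (k l : ℕ) (hk : 0 < k) (hl : 0 < l) :
    cg (of 0 ^ k * of 1 ^ l) (W k l 0 0) := by
  have h := cg_ctx (of 0 ^ (k-1)) (of 1 ^ (l-1)) _ _ cg_base
  have e1 : (of 0 ^ k * of 1 ^ l : FM) = of 0 ^ (k-1) * (of 0 * of 1) * of 1 ^ (l-1) := by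
    conv_lhs => rw [show k = (k-1) + 1 by omega, show l = (l-1) + 1 by omega]
    rw [pow_succ, pow_succ']
    simp [mul_assoc]
  have e2 : W k l 0 0 = of 0 ^ (k-1) * (of 1 * of 2 * of 0) * of 1 ^ (l-1) := by
    simp [W, XZp, YZp, mul_assoc]
  exact cg.trans (cg_of_eq e1) (cg.trans h (cg_of_eq e2.symm))

lemma cg_cstep (k l c d : ℕ) (hc : c + 2 ≤ k) :
    cg (W k l c d) (W k l (c+1) d) := by
  set v : FM := of 2 * (XZp c * (YZp d * (of 0 * of 1 ^ (l - 1 - d)))) with hv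
  have h := cg_ctx (of 0 ^ (k-2-c)) v _ _ cg_base
  have e1 : W k l c d = of 0 ^ (k-2-c) * (of 0 * of 1) * v := by
    rw [W, show k - 1 - c = (k-2-c) + 1 by omega, pow_succ]
    simp [mul_assoc, hv]
  have e2 : W k l (c+1) d = of 0 ^ (k-2-c) * (of 1 * of 2 * of 0) * v := by
    rw [W, show k - 1 - (c+1) = k-2-c by omega, show XZp (c+1) = (of 0 * of 2) * XZp c from rfl]
    simp [mul_assoc, hv]
  exact cg.trans (cg_of_eq e1) (cg.trans h (cg_of_eq e2.symm))

lemma cg_dstep (k l c d : ℕ) (hd : d + 2 ≤ l) :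
    cg (W k l c d) (W k l c (d+1)) := by
  set u : FM := of 0 ^ (k - 1 - c) * (of 1 * (of 2 * (XZp c * YZp d))) with hu
  have h := cg_ctx u (of 1 ^ (l-2-d)) _ _ cg_base
  have e1 : W k l c d = u * (of 0 * of 1) * of 1 ^ (l-2-d) := by
    rw [W, show l - 1 - d = (l-2-d) + 1 by omega, pow_succ']
    simp [hu, mul_assoc]
  have e2 : W k l c (d+1) = u * (of 1 * of 2 * of 0) * of 1 ^ (l-2-d) := by
    rw [W, show l - 1 - (d+1) = l-2-d by omega, YZp_succ']
    simp [hu, mul_assoc]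
  exact cg.trans (cg_of_eq e1) (cg.trans h (cg_of_eq e2.symm))

lemma cg_chain_c (k l : ℕ) (hk : 0 < k) (hl : 0 < l) :
    ∀ c, c ≤ k - 1 → cg (of 0 ^ k * of 1 ^ l) (W k l c 0) := by
  intro c
  induction c with
  | zero => intro _; exact cg_first k l hk hl
  | succ c ih =>
    intro hc
    exact cg.trans (ih (by omega)) (cg_cstep k l c 0 (by omega))

lemma cg_chain (k l : ℕ) (hk : 0 < k) (hl : 0 < l) :
    ∀ c d, c ≤ k - 1 → d ≤ l - 1 → cg (of 0 ^ k * of 1 ^ l) (W k l c d) := by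
  intro c d hc
  induction d with
  | zero => intro _; exact cg_chain_c k l hk hl c hc
  | succ d ih =>
    intro hd
    exact cg.trans (ih (by omega)) (cg_dstep k l c d (by omega))

lemma length_pow (a : FM) (n : ℕ) : (a ^ n).length = n * a.length := by
  induction n with
  | zero => simp [FreeMonoid.length_one]
  | succ n ih => rw [pow_succ, FreeMonoid.length_mul, ih]; ring

lemma length_XZp (n : ℕ) : (XZp n).length = 2 * n := by
  induction n with
  | zero => simp [XZp, FreeMonoid.length_one]
  | succ n ih => rw [XZp, FreeMonoid.length_mul, ih, FreeMonoid.length_mul]; simp; omega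

lemma length_YZp (n : ℕ) : (YZp n).length = 2 * n := by
  induction n with
  | zero => simp [YZp, FreeMonoid.length_one]
  | succ n ih => rw [YZp, FreeMonoid.length_mul, ih, FreeMonoid.length_mul]; simp; omega

lemma length_W (k l c d : ℕ) (hc : c ≤ k - 1) (hd : d ≤ l - 1) (hk : 0 < k) (hl : 0 < l) :
    (W k l c d).length = k + l + 1 + c + d := by
  simp only [W, FreeMonoid.length_mul, length_pow, length_XZp, length_YZp,
    FreeMonoid.length_of]
  omega

lemma toList_pow_of (a : Fin 3) (n : ℕ) :
    FreeMonoid.toList (of a ^ n) = List.replicate n a := by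
  induction n with
  | zero => simp [FreeMonoid.toList_one]
  | succ n ih => rw [pow_succ', FreeMonoid.toList_mul, ih, FreeMonoid.toList_of]; rfl

lemma length_toList (b : FM) : b.length = b.toList.length := rfl

lemma count_xs_ys_0 (k l : ℕ) : (xs k ++ ys l).count 0 = k := by
  simp [xs, ys, List.count_append, List.count_replicate]
lemma count_xs_ys_1 (k l : ℕ) : (xs k ++ ys l).count 1 = l := by
  simp [xs, ys, List.count_append, List.count_replicate]

end Stmt15

open Stmt15

/-- In `M = ⟨x, y, z | xy = yzx⟩` (letters `0, 1, 2` of `Fin 3`), for `k, l ≥ 1` the length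
set of `x^k y^l` is the interval `[k+l, 2(k+l)-1]`. -/
theorem stmt_15 (k l : ℕ) (hk : 0 < k) (hl : 0 < l) :
    LSet ({(FreeMonoid.of 0 * FreeMonoid.of 1,
        FreeMonoid.of 1 * FreeMonoid.of 2 * FreeMonoid.of 0)} :
        Set (FreeMonoid (Fin 3) × FreeMonoid (Fin 3)))
      (FreeMonoid.of 0 ^ k * FreeMonoid.of 1 ^ l) =
      Set.Icc (k + l) (2 * (k + l) - 1) := by
  ext m
  simp only [LSet, Set.mem_setOf_eq, Set.mem_Icc]
  constructor
  · rintro ⟨b, hb, rfl⟩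
    have hPhi : Phi (FreeMonoid.toList (FreeMonoid.of 0 ^ k * FreeMonoid.of 1 ^ l : FM)) =
        Phi b.toList := eqM_phi hb
    have htl : FreeMonoid.toList (FreeMonoid.of 0 ^ k * FreeMonoid.of 1 ^ l : FM) =
        xs k ++ ys l := by
      rw [FreeMonoid.toList_mul, toList_pow_of, toList_pow_of]; rfl
    rw [htl] at hPhi
    have h0 : (xs k ++ ys l).count 0 = b.toList.count 0 := congrArg (·.1) hPhi
    have h1 : (xs k ++ ys l).count 1 = b.toList.count 1 := congrArg (·.2.1) hPhi
    have h2 : mu (xs k ++ ys l) = mu b.toList := congrArg (·.2.2) hPhi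
    rw [count_xs_ys_0] at h0
    rw [count_xs_ys_1] at h1
    rw [mu_xs_ys k l hk hl] at h2
    have hz := count_two_le_mu b.toList
    have hlen := length_eq_counts b.toList
    rw [length_toList]
    omega
  · rintro ⟨h1, h2⟩
    by_cases hm : m = k + l
    · refine ⟨FreeMonoid.of 0 ^ k * FreeMonoid.of 1 ^ l, cg.refl _, ?_⟩
      rw [FreeMonoid.length_mul, length_pow, length_pow, FreeMonoid.length_of, FreeMonoid.length_of]
      omega
    · have he : m - (k + l) - 1 ≤ k + l - 2 := by omega
      set e := m - (k + l) - 1 with hedef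
      set c := min e (k - 1) with hcdef
      set d := e - c with hddef
      have hc : c ≤ k - 1 := min_le_right _ _
      have hd : d ≤ l - 1 := by omega
      refine ⟨W k l c d, cg_chain k l hk hl c d hc hd, ?_⟩
      rw [length_W k l c d hc hd hk hl]
      omega
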